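/- Let f : X → Y be a function between sets and φ : X → Σ. Define ∃_f φ : Y → Σ by (∃_f φ y)₁ = ⋃_{x ∈ f⁻¹(y)} !(φ x)₁ and (∃_f φ y)₀ = ↑_{!(∃_f φ y)₁} { ⟨n⟩ : there exists x ∈ f⁻¹(y) with n ∈ (φ x)₀ }. Then ∃_f φ y is an element of Σ for every y ∈ Y, and for every χ : Y → Σ one has ∃_f φ ≤ χ if and only if φ ≤ χ ∘ f. -/

import Mathlib

open CategoryTheory Encodable Denumerable

namespace Herbrand

/-- Kleene application in Kleene's first pca `K₁`: `e · n`. -/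
def kap (e n : ℕ) : Part ℕ := Nat.Partrec.Code.eval (ofNat Nat.Partrec.Code e) n

/-- `kapIn r n S` : `r · n` is defined and its value lies in `S`. -/
def kapIn (r n : ℕ) (S : Set ℕ) : Prop := ∃ v ∈ kap r n, v ∈ S

/-- The list coded by a natural number (canonical bijection `ℕ ≃ List ℕ`). -/
def toL (n : ℕ) : List ℕ := ofNat (List ℕ) n

/-- The code of a list of natural numbers. -/
def ofL (l : List ℕ) : ℕ := encode l

@[simp] lemma toL_ofL (l : List ℕ) : toL (ofL l) = l := ofNat_encode l

/-- `!A` : the set of codes of lists all of whose entries lie in `A`. -/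
def bang (A : Set ℕ) : Set ℕ := {n | ∀ x ∈ toL n, x ∈ A}

/-- `m ⪯ n` : every entry of the list coded by `m` is an entry of the list coded by `n`. -/
def sle (m n : ℕ) : Prop := ∀ x ∈ toL m, x ∈ toL n

lemma sle_refl (m : ℕ) : sle m m := fun _ hx => hx

lemma sle_trans {m n k : ℕ} (h1 : sle m n) (h2 : sle n k) : sle m k :=
  fun x hx => h2 x (h1 x hx)

/-- `S` is upward closed in `!A`. -/
def UpwardClosedIn (A S : Set ℕ) : Prop :=
  ∀ m ∈ S, ∀ n ∈ bang A, sle m n → n ∈ S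

/-- `↑_{!A} S` : the set of `n ∈ !A` with `m ⪯ n` for some `m ∈ S`. -/
def upClo (A S : Set ℕ) : Set ℕ := {n | n ∈ bang A ∧ ∃ m ∈ S, sle m n}

lemma mem_bang_univ (n : ℕ) : n ∈ bang Set.univ := fun x _ => Set.mem_univ x

/-- From a partial recursive function we get a `K₁`-code for it. -/
theorem exists_kap_eq {f : ℕ →. ℕ} (hf : Nat.Partrec f) : ∃ e, ∀ n, kap e n = f n := by
  obtain ⟨c, hc⟩ := Nat.Partrec.Code.exists_code.mp hf
  exact ⟨encode c, fun n => by simp [kap, hc]⟩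


/-- A pair of sets of numbers: candidate Herbrand truth value `(X₀, X₁)`. -/
structure HPair where
  act : Set ℕ
  pot : Set ℕ

/-- `X` is a Herbrand truth value (an element of `Σ`): `X₀ ⊆ !X₁` and
`X₀` is upward closed in `!X₁`. -/
def HPair.IsSigma (X : HPair) : Prop :=
  X.act ⊆ bang X.pot ∧ UpwardClosedIn X.pot X.act

/-- The preorder on `X → Σ` of the Herbrand tripos. -/
def hle {X : Type} (φ ψ : X → HPair) : Prop :=
  ∃ r : ℕ, ∀ x : X, ∀ n : ℕ,
    (n ∈ bang (φ x).pot → kapIn r n (bang (ψ x).pot)) ∧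
    (n ∈ (φ x).act → kapIn r n (ψ x).act)

/-- `A & B = {Nat.pair 0 a : a ∈ A} ∪ {Nat.pair 1 b : b ∈ B}`. -/
def amp (A B : Set ℕ) : Set ℕ :=
  (fun a => Nat.pair 0 a) '' A ∪ (fun b => Nat.pair 1 b) '' B

/-- `m_A`: the code of the list of all `a` with `Nat.pair 0 a` an entry of the list coded
by `m`. -/
def projL (m : ℕ) : ℕ :=
  ofL ((toL m).filterMap fun p => if p.unpair.1 = 0 then some p.unpair.2 else none)

/-- `m_B`: the code of the list of all `b` with `Nat.pair 1 b` an entry of the list coded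
by `m`. -/
def projR (m : ℕ) : ℕ :=
  ofL ((toL m).filterMap fun p => if p.unpair.1 = 1 then some p.unpair.2 else none)

/-- Conjunction of Herbrand truth values. -/
def conj (A B : HPair) : HPair where
  act := {m | m ∈ bang (amp A.pot B.pot) ∧ projL m ∈ A.act ∧ projR m ∈ B.act}
  pot := amp A.pot B.pot

/-- Disjunction of Herbrand truth values. -/
def disj (A B : HPair) : HPair where
  act := {m | m ∈ bang (amp A.pot B.pot) ∧ (projL m ∈ A.act ∨ projR m ∈ B.act)}
  pot := amp A.pot B.pot

/-- The potential realizers of an implication. -/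
def implPot (A B : HPair) : Set ℕ := {c | ∀ m ∈ bang A.pot, kapIn c m (bang B.pot)}

/-- Implication of Herbrand truth values. -/
def impl (A B : HPair) : HPair where
  act := upClo (implPot A B)
    {n | ∃ c, n = ofL [c] ∧ c ∈ implPot A B ∧ ∀ m ∈ A.act, kapIn c m B.act}
  pot := implPot A B

/-- The bottom Herbrand truth value `(∅, ∅)`. -/
def bot : HPair := ⟨∅, ∅⟩

/-- Negation of Herbrand truth values: `¬A = A → (∅, ∅)`. -/
def neg (A : HPair) : HPair := impl A bot


/-- The existential quantifier `∃_f φ` along `f : X → Y`. -/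
def hexists {X Y : Type} (f : X → Y) (φ : X → HPair) (y : Y) : HPair where
  act := upClo (⋃ x ∈ {x | f x = y}, bang (φ x).pot)
    {m | ∃ n, m = ofL [n] ∧ ∃ x, f x = y ∧ n ∈ (φ x).act}
  pot := ⋃ x ∈ {x | f x = y}, bang (φ x).pot

/-
A realizer `r` of `φ ≤ χ ∘ f` acts on single elements of `!(φ x)₁`, whereas an element of
`!(∃_f φ y)₁` is a list of such elements, possibly for different `x` over `y`. Applying `r`
to each entry and concatenating the resulting lists is computable and lands in `!(χ y)₁`; the
result contains `r · n` for the entry `n` witnessing an actual realizer, so upward closure of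
`(χ y)₀` makes it actual. Conversely, a realizer of `∃_f φ ≤ χ` is precomposed with `n ↦ ⟨n⟩`.
-/

lemma kap_partrec (r : ℕ) : Partrec (kap r) :=
  Partrec.nat_iff.2 (Nat.Partrec.Code.exists_code.mpr ⟨_, rfl⟩)

lemma exists_kap_eq_kap_singleton (r : ℕ) : ∃ e, ∀ n, kap e n = kap r (ofL [n]) :=
  exists_kap_eq <| Partrec.nat_iff.1 <| (kap_partrec r).comp <| Computable.encode.comp <|
    Computable.list_cons.comp Computable.id (Computable.const [])

/-- The state `(l, acc)` holds the entries still to be processed and the list built so far. -/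
def concatStep (r : ℕ) : List ℕ × List ℕ →. List ℕ ⊕ (List ℕ × List ℕ)
  | ([], acc) => Part.some (.inl acc)
  | (n :: t, acc) => (kap r n).map fun v => .inr (t, acc ++ toL v)

lemma concatStep_partrec (r : ℕ) : Partrec (concatStep r) := by
  have h := Partrec.optionCasesOn_right
    (o := fun p : List ℕ × List ℕ => p.1.head?)
    (f := fun p => (Sum.inl p.2 : List ℕ ⊕ (List ℕ × List ℕ)))
    (g := fun (p : List ℕ × List ℕ) (n : ℕ) => (kap r n).map fun v =>
      (Sum.inr (p.1.tail, p.2 ++ toL v) : List ℕ ⊕ (List ℕ × List ℕ)))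
    (Primrec.list_head?.to_comp.comp Computable.fst)
    (Computable.sumInl.comp Computable.snd)
    (Partrec.to₂ (((kap_partrec r).comp Computable.snd).map
      (Computable.to₂ (Computable.sumInr.comp (Computable.pair
        (Primrec.list_tail.to_comp.comp (Computable.fst.comp (Computable.fst.comp Computable.fst)))
        (Computable.list_append.comp (Computable.snd.comp (Computable.fst.comp Computable.fst))
          ((Computable.ofNat (List ℕ)).comp Computable.snd)))))))
  exact h.of_eq fun p => by rcases p with ⟨_ | ⟨n, t⟩, acc⟩ <;> rfl

lemma exists_mem_fix_concatStep (r : ℕ) (l acc : List ℕ) (hl : ∀ n ∈ l, (kap r n).Dom) :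
    ∃ w ∈ PFun.fix (concatStep r) (l, acc),
      ∀ x, x ∈ w ↔ x ∈ acc ∨ ∃ n ∈ l, ∃ v ∈ kap r n, x ∈ toL v := by
  induction l generalizing acc with
  | nil => exact ⟨acc, PFun.fix_stop (Part.mem_some _), by simp⟩
  | cons n t ih =>
    set v := (kap r n).get (hl n List.mem_cons_self)
    have hv : ∀ v', v' ∈ kap r n ↔ v' = v :=
      fun _ => ⟨fun h => Part.mem_unique h (Part.get_mem _), fun h => h ▸ Part.get_mem _⟩
    have hstep : .inr (t, acc ++ toL v) ∈ concatStep r (n :: t, acc) :=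
      Part.mem_map _ (Part.get_mem _)
    obtain ⟨w, hw, hmem⟩ := ih (acc ++ toL v) fun n' hn' => hl n' (List.mem_cons_of_mem _ hn')
    refine ⟨w, (PFun.fix_fwd_eq hstep).symm ▸ hw, fun x => ?_⟩
    simp only [hmem, List.mem_append, List.mem_cons, exists_eq_or_imp, hv, exists_eq_left]
    tauto

def kapConcat (r m : ℕ) : Part ℕ := (PFun.fix (concatStep r) (toL m, [])).map ofL

lemma kapConcat_partrec (r : ℕ) : Partrec (kapConcat r) :=
  ((concatStep_partrec r).fix.comp
    (Computable.pair (Computable.ofNat (List ℕ)) (Computable.const []))).map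
    (Computable.to₂ (Computable.encode.comp Computable.snd))

lemma exists_mem_kapConcat (r m : ℕ) (hm : ∀ n ∈ toL m, (kap r n).Dom) :
    ∃ w ∈ kapConcat r m, ∀ x, x ∈ toL w ↔ ∃ n ∈ toL m, ∃ v ∈ kap r n, x ∈ toL v := by
  obtain ⟨w, hw, hmem⟩ := exists_mem_fix_concatStep r (toL m) [] hm
  exact ⟨ofL w, Part.mem_map _ hw, by simpa using hmem⟩

lemma exists_mem_kapConcat_bang {r m : ℕ} {P : Set ℕ} (hm : ∀ n ∈ toL m, kapIn r n (bang P)) :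
    ∃ w ∈ kapConcat r m, w ∈ bang P ∧ ∀ n ∈ toL m, ∀ v ∈ kap r n, sle v w := by
  obtain ⟨w, hw, hmem⟩ := exists_mem_kapConcat r m fun n hn =>
    (hm n hn).elim fun v hv => Part.dom_iff_mem.2 ⟨v, hv.1⟩
  refine ⟨w, hw, fun x hx => ?_, fun n hn v hv x hx => (hmem x).2 ⟨n, hn, v, hv, hx⟩⟩
  obtain ⟨n, hn, v, hv, hxv⟩ := (hmem x).1 hx
  obtain ⟨v', hv', hv'P⟩ := hm n hn
  exact hv'P x (Part.mem_unique hv hv' ▸ hxv)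

lemma exists_kap_eq_kapConcat (r : ℕ) : ∃ e, ∀ m, kap e m = kapConcat r m :=
  exists_kap_eq (Partrec.nat_iff.1 (kapConcat_partrec r))

lemma ofL_singleton_mem_bang {A : Set ℕ} {n : ℕ} : ofL [n] ∈ bang A ↔ n ∈ A := by
  simp [bang]

lemma isSigma_upClo (A S : Set ℕ) : HPair.IsSigma ⟨upClo A S, A⟩ :=
  ⟨fun _ hm => hm.1, fun _ ⟨_, m₀, hm₀, hsle⟩ _ hn hmn => ⟨hn, m₀, hm₀, sle_trans hsle hmn⟩⟩

lemma hexists_isSigma {X Y : Type} (f : X → Y) (φ : X → HPair) (y : Y) :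
    (hexists f φ y).IsSigma :=
  isSigma_upClo _ _

section Hexists

variable {X Y : Type} {f : X → Y} {φ : X → HPair}

lemma mem_hexists_pot {y : Y} {n : ℕ} :
    n ∈ (hexists f φ y).pot ↔ ∃ x, f x = y ∧ n ∈ bang (φ x).pot := by
  simp [hexists]

lemma ofL_singleton_mem_bang_hexists_pot {x : X} {n : ℕ} (hn : n ∈ bang (φ x).pot) :
    ofL [n] ∈ bang (hexists f φ (f x)).pot :=
  ofL_singleton_mem_bang.2 (mem_hexists_pot.2 ⟨x, rfl, hn⟩)

lemma ofL_singleton_mem_hexists_act {x : X} (hφx : (φ x).IsSigma) {n : ℕ}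
    (hn : n ∈ (φ x).act) : ofL [n] ∈ (hexists f φ (f x)).act :=
  ⟨ofL_singleton_mem_bang_hexists_pot (hφx.1 hn), ofL [n], ⟨n, rfl, x, rfl, hn⟩, sle_refl _⟩

lemma hle_comp_of_hexists_hle (hφ : ∀ x, (φ x).IsSigma) {χ : Y → HPair}
    (h : hle (hexists f φ) χ) : hle φ (χ ∘ f) := by
  obtain ⟨r, hr⟩ := h
  obtain ⟨e, he⟩ := exists_kap_eq_kap_singleton r
  refine ⟨e, fun x n => ⟨fun hn => ?_, fun hn => ?_⟩⟩ <;> simp only [kapIn, he]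
  exacts [(hr (f x) _).1 (ofL_singleton_mem_bang_hexists_pot hn),
    (hr (f x) _).2 (ofL_singleton_mem_hexists_act (hφ x) hn)]

lemma hexists_hle_of_hle_comp {χ : Y → HPair} (hχ : ∀ y, (χ y).IsSigma)
    (h : hle φ (χ ∘ f)) : hle (hexists f φ) χ := by
  obtain ⟨r, hr⟩ := h
  obtain ⟨e, he⟩ := exists_kap_eq_kapConcat r
  have hconcat : ∀ y, ∀ m ∈ bang (hexists f φ y).pot, ∃ w ∈ kap e m, w ∈ bang (χ y).pot ∧
      ∀ n ∈ toL m, ∀ v ∈ kap r n, sle v w := by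
    intro y m hm
    rw [he]
    refine exists_mem_kapConcat_bang fun n hn => ?_
    obtain ⟨x, rfl, hnx⟩ := mem_hexists_pot.1 (hm n hn)
    exact (hr x n).1 hnx
  refine ⟨e, fun y m => ⟨fun hm => ?_, ?_⟩⟩
  · obtain ⟨w, hw, hwP, -⟩ := hconcat y m hm
    exact ⟨w, hw, hwP⟩
  · rintro ⟨hm, -, ⟨n, rfl, x, rfl, hn⟩, hsle⟩
    obtain ⟨w, hw, hwP, hsub⟩ := hconcat (f x) m hm
    obtain ⟨v, hv, hvχ⟩ := (hr x n).2 hn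
    exact ⟨w, hw, (hχ (f x)).2 v hvχ w hwP (hsub n (hsle n (by simp)) v hv)⟩

end Hexists

/-- `∃_f φ y` lands in `Σ` and `∃_f` is left adjoint to reindexing. -/
theorem hexists_isSigma_and_adjoint {X Y : Type} (f : X → Y) (φ : X → HPair)
    (hφ : ∀ x, (φ x).IsSigma) :
    (∀ y, (hexists f φ y).IsSigma) ∧
    ∀ χ : Y → HPair, (∀ y, (χ y).IsSigma) →
      (hle (hexists f φ) χ ↔ hle φ (χ ∘ f)) :=
  ⟨hexists_isSigma f φ, fun _ hχ =>
    ⟨hle_comp_of_hexists_hle hφ, hexists_hle_of_hle_comp hχ⟩⟩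

end Herbrand
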